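/- arXiv:2510.01824 — 4 statements merged into one kernel-verified Lean document; each statement's English description precedes it below -/
import Mathlib

section
/- (Performance difference for episodic terminal-reward autoregressive policies.) Let π and π' be two autoregressive policies on the finite product space 𝒳. Then E_{x∼π}[f(x)] − E_{x∼π'}[f(x)] = E_{x∼π}[ ∑_{k=1}^n A^{π'}(x_{<k}, x_k) ], where the advantages are computed with respect to π'. -/
open Finset

/-- An autoregressive policy on the finite product space `𝒳 = 𝒳₁ × ⋯ × 𝒳ₙ`.
`cond k x` is the conditional probability `π(x_k | x_{<k})`: it depends only
on the coordinates of `x` with index `≤ k`, is nonnegative, and for any fixed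
prefix the probabilities of the possible values of coordinate `k` sum to 1. -/
structure ARPolicy (n : ℕ) (X : Fin n → Type) [∀ i, Fintype (X i)] [∀ i, DecidableEq (X i)] where
  cond : (k : Fin n) → ((i : Fin n) → X i) → ℝ
  dep : ∀ (k : Fin n) (x y : (i : Fin n) → X i),
    (∀ i : Fin n, i ≤ k → x i = y i) → cond k x = cond k y
  nonneg : ∀ (k : Fin n) (x : (i : Fin n) → X i), 0 ≤ cond k x
  sum_one : ∀ (k : Fin n) (x : (i : Fin n) → X i),
    ∑ v : X k, cond k (Function.update x k v) = 1

/-- The joint probability `π(x) = ∏_k π(x_k | x_{<k})` induced by an autoregressive policy. -/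
noncomputable def ARPolicy.joint {n : ℕ} {X : Fin n → Type} [∀ i, Fintype (X i)]
    [∀ i, DecidableEq (X i)] (π : ARPolicy n X) (x : (i : Fin n) → X i) : ℝ :=
  ∏ k : Fin n, π.cond k x

/-- `V^π(x_{<k})`: the expected terminal reward obtained by completing the length-`k`
prefix of `x` by sampling the remaining coordinates from the conditionals of `π`. -/
noncomputable def ARPolicy.value {n : ℕ} {X : Fin n → Type} [∀ i, Fintype (X i)]
    [∀ i, DecidableEq (X i)] (π : ARPolicy n X) (f : ((i : Fin n) → X i) → ℝ)
    (k : ℕ) (x : (i : Fin n) → X i) : ℝ :=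
  ∑ y : (i : Fin n) → X i,
    if ∀ i : Fin n, (i : ℕ) < k → y i = x i then
      (∏ j : Fin n, if k ≤ (j : ℕ) then π.cond j y else 1) * f y
    else 0

/-- The advantage `A^π(x_{<k}, x_k) = Q^π(x_{<k}, x_k) - V^π(x_{<k})`, where
`Q^π(x_{<k}, x_k) = V^π(x_{≤k})`. -/
noncomputable def ARPolicy.advantage {n : ℕ} {X : Fin n → Type} [∀ i, Fintype (X i)]
    [∀ i, DecidableEq (X i)] (π : ARPolicy n X) (f : ((i : Fin n) → X i) → ℝ)
    (k : Fin n) (x : (i : Fin n) → X i) : ℝ :=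
  π.value f ((k : ℕ) + 1) x - π.value f (k : ℕ) x


namespace ARPolicy

variable {n : ℕ} {X : Fin n → Type} [∀ i, Fintype (X i)] [∀ i, DecidableEq (X i)]

lemma value_of_ge (π : ARPolicy n X) (f : ((i : Fin n) → X i) → ℝ) {k : ℕ} (hk : n ≤ k)
    (x : (i : Fin n) → X i) : π.value f k x = f x := by
  unfold ARPolicy.value
  rw [Finset.sum_eq_single x]
  · rw [if_pos (fun i _ => rfl), Finset.prod_eq_one, one_mul]
    intro j _
    exact if_neg (Nat.not_le.2 (lt_of_lt_of_le j.2 hk))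
  · intro y _ hy
    rw [if_neg]
    intro h
    exact hy (funext fun i => h i (lt_of_lt_of_le i.2 hk))
  · intro h; exact absurd (mem_univ x) h

lemma value_rec (π : ARPolicy n X) (f : ((i : Fin n) → X i) → ℝ) (k : Fin n)
    (x : (i : Fin n) → X i) :
    π.value f (k : ℕ) x
      = ∑ v : X k, π.cond k (Function.update x k v)
          * π.value f ((k : ℕ) + 1) (Function.update x k v) := by
  unfold ARPolicy.value
  simp only [Finset.mul_sum]
  rw [Finset.sum_comm]
  refine Finset.sum_congr rfl fun y _ => ?_
  by_cases hp : ∀ i : Fin n, (i : ℕ) < (k : ℕ) → y i = x i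
  · rw [if_pos hp]
    rw [Finset.sum_eq_single (y k)]
    · have hcond : ∀ i : Fin n, (i : ℕ) < (k : ℕ) + 1 → y i = Function.update x k (y k) i := by
        intro i hi
        rcases eq_or_ne i k with h | h
        · subst h; rw [Function.update_self]
        · rw [Function.update_of_ne h]
          exact hp i (lt_of_le_of_ne (Nat.lt_succ_iff.1 hi) (fun hc => h (Fin.ext hc)))
      rw [if_pos hcond]
      have hdep : π.cond k (Function.update x k (y k)) = π.cond k y := by
        apply π.dep
        intro i hi
        rcases eq_or_ne i k with h | h
        · subst h; rw [Function.update_self]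
        · rw [Function.update_of_ne h]
          exact (hp i (lt_of_le_of_ne hi (fun hc => h (Fin.ext hc)))).symm
      rw [hdep, ← mul_assoc]
      congr 1
      have hsplit : ∀ j : Fin n,
          (if (k : ℕ) ≤ (j : ℕ) then π.cond j y else 1)
            = (if j = k then π.cond k y else 1)
              * (if (k : ℕ) + 1 ≤ (j : ℕ) then π.cond j y else 1) := by
        intro j
        rcases eq_or_ne j k with h | h
        · subst h
          rw [if_pos le_rfl, if_pos rfl, if_neg (by omega), mul_one]
        · rw [if_neg h, one_mul]
          have hne : (j : ℕ) ≠ (k : ℕ) := fun hc => h (Fin.ext hc)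
          by_cases hle : (k : ℕ) ≤ (j : ℕ)
          · rw [if_pos hle, if_pos (by omega : (k : ℕ) + 1 ≤ (j : ℕ))]
          · rw [if_neg hle, if_neg (by omega)]
      rw [Finset.prod_congr rfl (fun j _ => hsplit j), Finset.prod_mul_distrib,
        Finset.prod_ite_eq' univ k (fun _ => π.cond k y), if_pos (mem_univ k)]
    · intro v _ hv
      rw [if_neg, mul_zero]
      intro h
      exact hv ((h k (Nat.lt_succ_self _)).trans (Function.update_self k v x)).symm
    · intro h; exact absurd (mem_univ (y k)) h
  · rw [if_neg hp]
    refine (Finset.sum_eq_zero fun v _ => ?_).symm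
    rw [if_neg, mul_zero]
    intro h
    apply hp
    intro i hi
    have hne : i ≠ k := fun hc => by subst hc; exact lt_irrefl _ hi
    rw [← Function.update_of_ne hne v x]
    exact h i (Nat.lt_succ_of_lt hi)

lemma value_one (π : ARPolicy n X) :
    ∀ (m k : ℕ), n ≤ k + m → ∀ x : (i : Fin n) → X i,
      π.value (fun _ => 1) k x = 1 := by
  intro m
  induction m with
  | zero => intro k hk x; exact π.value_of_ge _ (by omega) x
  | succ m ih =>
    intro k hk x
    by_cases h : n ≤ k
    · exact π.value_of_ge _ h x
    · push_neg at h
      have := π.value_rec (fun _ => 1) ⟨k, h⟩ x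
      simp only at this
      rw [this]
      have : ∀ v : X ⟨k, h⟩,
          π.cond ⟨k, h⟩ (Function.update x ⟨k, h⟩ v)
            * π.value (fun _ => 1) (k + 1) (Function.update x ⟨k, h⟩ v)
          = π.cond ⟨k, h⟩ (Function.update x ⟨k, h⟩ v) := by
        intro v
        rw [ih (k + 1) (by omega), mul_one]
      rw [Finset.sum_congr rfl (fun v _ => this v)]
      exact π.sum_one ⟨k, h⟩ x

lemma value_zero (π : ARPolicy n X) (f : ((i : Fin n) → X i) → ℝ) (x : (i : Fin n) → X i) :
    π.value f 0 x = ∑ y : (i : Fin n) → X i, π.joint y * f y := by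
  unfold ARPolicy.value ARPolicy.joint
  refine Finset.sum_congr rfl fun y _ => ?_
  rw [if_pos (fun i hi => absurd hi (Nat.not_lt_zero _))]
  congr 1

lemma joint_sum_one (π : ARPolicy n X) [∀ i, Nonempty (X i)] :
    ∑ x : (i : Fin n) → X i, π.joint x = 1 := by
  obtain ⟨x₀⟩ : Nonempty ((i : Fin n) → X i) := inferInstance
  have h := π.value_one n 0 (by omega) x₀
  rw [π.value_zero (fun _ => 1) x₀] at h
  simpa using h

end ARPolicy

/-- Performance difference lemma for episodic terminal-reward autoregressive policies:
`E_{x∼π}[f(x)] − E_{x∼π'}[f(x)] = E_{x∼π}[ ∑_{k=1}^n A^{π'}(x_{<k}, x_k) ]`,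
where the advantages are computed with respect to `π'`. -/
theorem performance_difference {n : ℕ} {X : Fin n → Type} [∀ i, Fintype (X i)]
    [∀ i, Nonempty (X i)] [∀ i, DecidableEq (X i)]
    (π π' : ARPolicy n X) (f : ((i : Fin n) → X i) → ℝ) :
    (∑ x : (i : Fin n) → X i, π.joint x * f x)
      - (∑ x : (i : Fin n) → X i, π'.joint x * f x)
      = ∑ x : (i : Fin n) → X i, π.joint x * ∑ k : Fin n, π'.advantage f k x := by
  have htel : ∀ x : (i : Fin n) → X i,
      ∑ k : Fin n, π'.advantage f k x
        = f x - ∑ y : (i : Fin n) → X i, π'.joint y * f y := by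
    intro x
    unfold ARPolicy.advantage
    rw [Fin.sum_univ_eq_sum_range (fun k => π'.value f (k + 1) x - π'.value f k x) n,
      Finset.sum_range_sub (fun k => π'.value f k x),
      π'.value_of_ge f le_rfl, π'.value_zero f x]
  simp only [htel, mul_sub, Finset.sum_sub_distrib, ← Finset.sum_mul,
    π.joint_sum_one, one_mul]
end

section
/- (Cross-order performance difference.) Let σ and σ' be permutations of {1,…,n}, let π(·|σ) be a σ-ordered autoregressive policy and π'(·|σ') a σ'-ordered autoregressive policy on the finite product space 𝒳. Then E_{x∼π(·|σ)}[f(x)] − E_{x∼π'(·|σ')}[f(x)] = E_{x∼π(·|σ)}[ ∑_{k=1}^n A^{π',σ'}(σ'(x)_{<k}, x_k) ], where the inner sum ranges over the original coordinate indices k = 1,…,n and the advantages are computed with respect to π' generating in order σ'. -/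
open Finset

/-- A `σ`-ordered autoregressive policy on the finite product space
`𝒳 = 𝒳₁ × ⋯ × 𝒳ₙ`: coordinates are sampled in the order `σ 0, σ 1, …`.
`cond k x` is the conditional probability `π(x_{σ k} | x_{σ_{<k}}, σ)`: it depends
only on the coordinates of `x` at positions `σ i` with `i ≤ k`, is nonnegative, and
for any fixed partial assignment the probabilities of the possible values of
coordinate `σ k` sum to 1. -/
structure ARPolicyOrd (n : ℕ) (X : Fin n → Type) [∀ i, Fintype (X i)]
    [∀ i, DecidableEq (X i)] (σ : Equiv.Perm (Fin n)) where
  cond : (k : Fin n) → ((i : Fin n) → X i) → ℝ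
  dep : ∀ (k : Fin n) (x y : (i : Fin n) → X i),
    (∀ i : Fin n, i ≤ k → x (σ i) = y (σ i)) → cond k x = cond k y
  nonneg : ∀ (k : Fin n) (x : (i : Fin n) → X i), 0 ≤ cond k x
  sum_one : ∀ (k : Fin n) (x : (i : Fin n) → X i),
    ∑ v : X (σ k), cond k (Function.update x (σ k) v) = 1

/-- The joint probability `π(x|σ) = ∏_k π(x_{σ k} | x_{σ_{<k}}, σ)`. -/
noncomputable def ARPolicyOrd.joint {n : ℕ} {X : Fin n → Type} [∀ i, Fintype (X i)]
    [∀ i, DecidableEq (X i)] {σ : Equiv.Perm (Fin n)} (π : ARPolicyOrd n X σ)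
    (x : (i : Fin n) → X i) : ℝ :=
  ∏ k : Fin n, π.cond k x

/-- `V^{π,σ}` of the partial assignment consisting of the coordinates of `x` whose
rank in `σ` is `< r`: the conditional expectation of `f` obtained by completing this
partial assignment with `π` in order `σ`. -/
noncomputable def ARPolicyOrd.value {n : ℕ} {X : Fin n → Type} [∀ i, Fintype (X i)]
    [∀ i, DecidableEq (X i)] {σ : Equiv.Perm (Fin n)} (π : ARPolicyOrd n X σ)
    (f : ((i : Fin n) → X i) → ℝ) (r : ℕ) (x : (i : Fin n) → X i) : ℝ :=
  ∑ y : (i : Fin n) → X i,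
    if ∀ i : Fin n, (i : ℕ) < r → y (σ i) = x (σ i) then
      (∏ j : Fin n, if r ≤ (j : ℕ) then π.cond j y else 1) * f y
    else 0

/-- The advantage `A^{π,σ}(σ(x)_{<k}, x_k)` at an *original* coordinate index `k`:
`Q^{π,σ}(σ(x)_{<k}, x_k) − V^{π,σ}(σ(x)_{<k})`, where `σ(x)_{<k}` is the restriction
of `x` to the coordinates whose rank in `σ` is strictly smaller than the rank
`σ⁻¹ k` of `k`, and `Q` is `V` of this partial assignment extended with the value
`x_k` at coordinate `k`. -/
noncomputable def ARPolicyOrd.advantageAt {n : ℕ} {X : Fin n → Type} [∀ i, Fintype (X i)]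
    [∀ i, DecidableEq (X i)] {σ : Equiv.Perm (Fin n)} (π : ARPolicyOrd n X σ)
    (f : ((i : Fin n) → X i) → ℝ) (k : Fin n) (x : (i : Fin n) → X i) : ℝ :=
  π.value f ((σ.symm k : ℕ) + 1) x - π.value f (σ.symm k : ℕ) x


section Aux
variable {n : ℕ} {X : Fin n → Type} [∀ i, Fintype (X i)] [∀ i, DecidableEq (X i)]
  {σ : Equiv.Perm (Fin n)} (π : ARPolicyOrd n X σ)

lemma value_ge (f : ((i : Fin n) → X i) → ℝ) {r : ℕ} (hr : n ≤ r)
    (x : (i : Fin n) → X i) : π.value f r x = f x := by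
  rw [ARPolicyOrd.value, Finset.sum_eq_single x]
  · rw [if_pos (fun i _ => rfl)]
    rw [Finset.prod_eq_one fun j _ => if_neg (by omega), one_mul]
  · intro y _ hy
    rw [if_neg]
    intro h
    exact hy (funext fun j => by
      have := h (σ.symm j) (lt_of_lt_of_le (σ.symm j).isLt hr)
      rwa [Equiv.apply_symm_apply] at this)
  · intro h; exact absurd (Finset.mem_univ x) h

lemma value_zero (f : ((i : Fin n) → X i) → ℝ) (x : (i : Fin n) → X i) :
    π.value f 0 x = ∑ y : (i : Fin n) → X i, π.joint y * f y := by
  unfold ARPolicyOrd.value ARPolicyOrd.joint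
  refine Finset.sum_congr rfl fun y _ => ?_
  rw [if_pos (fun i h => absurd h (by omega))]
  congr 1

lemma value_step (f : ((i : Fin n) → X i) → ℝ) {r : ℕ} (hr : r < n)
    (x : (i : Fin n) → X i) :
    π.value f r x = ∑ v : X (σ ⟨r, hr⟩),
      π.cond ⟨r, hr⟩ (Function.update x (σ ⟨r, hr⟩) v) *
        π.value f (r + 1) (Function.update x (σ ⟨r, hr⟩) v) := by
  have hσne : ∀ i : Fin n, (i : ℕ) < r → σ i ≠ σ ⟨r, hr⟩ := by
    intro i hi h
    have : (i : ℕ) = r := congrArg Fin.val (σ.injective h)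
    omega
  have prod_split : ∀ y : (i : Fin n) → X i,
      (∏ j : Fin n, if r ≤ (j : ℕ) then π.cond j y else 1)
        = π.cond ⟨r, hr⟩ y * ∏ j : Fin n, if r + 1 ≤ (j : ℕ) then π.cond j y else 1 := by
    intro y
    calc (∏ j : Fin n, if r ≤ (j : ℕ) then π.cond j y else 1)
        = ∏ j : Fin n, ((if j = ⟨r, hr⟩ then π.cond j y else 1) *
            (if r + 1 ≤ (j : ℕ) then π.cond j y else 1)) := by
          refine Finset.prod_congr rfl fun j _ => ?_
          by_cases h1 : (j : ℕ) = r
          · rw [if_pos (by omega : r ≤ (j : ℕ)), if_pos (Fin.ext h1),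
              if_neg (by omega), mul_one]
          · rw [if_neg (fun hh => h1 (congrArg Fin.val hh))]
            by_cases h2 : r ≤ (j : ℕ)
            · rw [if_pos h2, if_pos (by omega), one_mul]
            · rw [if_neg h2, if_neg (by omega), one_mul]
      _ = (∏ j : Fin n, if j = ⟨r, hr⟩ then π.cond j y else 1) *
            ∏ j : Fin n, if r + 1 ≤ (j : ℕ) then π.cond j y else 1 :=
          Finset.prod_mul_distrib
      _ = π.cond ⟨r, hr⟩ y * ∏ j : Fin n, if r + 1 ≤ (j : ℕ) then π.cond j y else 1 := by
          rw [Finset.prod_ite_eq' Finset.univ ⟨r, hr⟩ (fun j => π.cond j y),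
            if_pos (Finset.mem_univ _)]
  simp only [ARPolicyOrd.value, Finset.mul_sum]
  rw [Finset.sum_comm]
  refine Finset.sum_congr rfl fun y _ => ?_
  by_cases hQ : ∀ i : Fin n, (i : ℕ) < r → y (σ i) = x (σ i)
  · rw [if_pos hQ, prod_split]
    rw [Finset.sum_eq_single (y (σ ⟨r, hr⟩))]
    · have hdep : π.cond ⟨r, hr⟩ y
          = π.cond ⟨r, hr⟩ (Function.update x (σ ⟨r, hr⟩) (y (σ ⟨r, hr⟩))) := by
        apply π.dep
        intro i hi
        rcases eq_or_lt_of_le hi with h | h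
        · subst h; rw [Function.update_self]
        · rw [Function.update_of_ne (hσne i h)]
          exact hQ i h
      rw [if_pos, ← hdep]
      · ring
      · intro i hi
        by_cases h : (i : ℕ) < r
        · rw [Function.update_of_ne (hσne i h)]; exact hQ i h
        · have hir : (i : ℕ) = r := by omega
          have : i = (⟨r, hr⟩ : Fin n) := Fin.ext hir
          subst this; rw [Function.update_self]
    · intro v _ hv
      rw [if_neg, mul_zero]
      intro hPv
      have := hPv ⟨r, hr⟩ (by simp)
      rw [Function.update_self] at this
      exact hv this.symm
    · intro h; exact absurd (Finset.mem_univ _) h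
  · rw [if_neg hQ]
    symm
    apply Finset.sum_eq_zero
    intro v _
    rw [if_neg, mul_zero]
    intro hPv
    apply hQ
    intro i hi
    have := hPv i (by omega)
    rwa [Function.update_of_ne (hσne i hi)] at this

lemma value_one : ∀ (m r : ℕ), n ≤ r + m → ∀ x : (i : Fin n) → X i,
    π.value (fun _ => 1) r x = 1 := by
  intro m
  induction m with
  | zero => intro r h x; rw [value_ge π _ (by omega)]
  | succ m ih =>
    intro r h x
    by_cases hr : n ≤ r
    · rw [value_ge π _ hr]
    · have hrn : r < n := by omega
      rw [value_step π _ hrn]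
      have : ∀ v : X (σ ⟨r, hrn⟩),
          π.value (fun _ => 1) (r + 1) (Function.update x (σ ⟨r, hrn⟩) v) = 1 :=
        fun v => ih (r + 1) (by omega) _
      simp only [this, mul_one]
      exact π.sum_one _ x

lemma joint_sum_one [∀ i, Nonempty (X i)] :
    ∑ x : (i : Fin n) → X i, π.joint x = 1 := by
  have x0 : (i : Fin n) → X i := fun i => Classical.arbitrary _
  have h := value_one π n 0 (by omega) x0
  rw [value_zero] at h
  simpa using h

end Aux

/-- Cross-order performance difference: for a `σ`-ordered policy `π` and a
`σ'`-ordered policy `π'`,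
`E_{x∼π(·|σ)}[f(x)] − E_{x∼π'(·|σ')}[f(x)]
  = E_{x∼π(·|σ)}[ ∑_{k=1}^n A^{π',σ'}(σ'(x)_{<k}, x_k) ]`,
where the inner sum ranges over the original coordinate indices and the advantages
are computed with respect to `π'` generating in order `σ'`. -/
theorem cross_order_performance_difference {n : ℕ} {X : Fin n → Type}
    [∀ i, Fintype (X i)] [∀ i, Nonempty (X i)] [∀ i, DecidableEq (X i)]
    (σ σ' : Equiv.Perm (Fin n)) (π : ARPolicyOrd n X σ) (π' : ARPolicyOrd n X σ')
    (f : ((i : Fin n) → X i) → ℝ) :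
    (∑ x : (i : Fin n) → X i, π.joint x * f x)
      - (∑ x : (i : Fin n) → X i, π'.joint x * f x)
      = ∑ x : (i : Fin n) → X i, π.joint x * ∑ k : Fin n, π'.advantageAt f k x := by
  have hadv : ∀ x : (i : Fin n) → X i,
      (∑ k : Fin n, π'.advantageAt f k x)
        = f x - ∑ y : (i : Fin n) → X i, π'.joint y * f y := by
    intro x
    have h1 : (∑ k : Fin n, π'.advantageAt f k x)
        = ∑ r : Fin n, (π'.value f ((r : ℕ) + 1) x - π'.value f (r : ℕ) x) := by
      refine Fintype.sum_equiv σ'.symm _ _ fun k => ?_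
      rfl
    rw [h1, Fin.sum_univ_eq_sum_range
      (fun r : ℕ => π'.value f (r + 1) x - π'.value f r x) n,
      Finset.sum_range_sub (fun r : ℕ => π'.value f r x) n,
      value_ge π' f le_rfl x, value_zero π' f x]
  calc (∑ x : (i : Fin n) → X i, π.joint x * f x)
      - (∑ x : (i : Fin n) → X i, π'.joint x * f x)
      = ∑ x : (i : Fin n) → X i,
          (π.joint x * f x
            - π.joint x * ∑ y : (i : Fin n) → X i, π'.joint y * f y) := by
        rw [Finset.sum_sub_distrib, ← Finset.sum_mul, joint_sum_one π, one_mul]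
    _ = ∑ x : (i : Fin n) → X i, π.joint x * ∑ k : Fin n, π'.advantageAt f k x := by
        refine Finset.sum_congr rfl fun x _ => ?_
        rw [hadv x]; ring
end

section
/- (First-order equivalence of the PPO surrogate with the true objective.) Suppose that for each k and each prefix x_{<k}, the map θ ↦ π_θ(x_k|x_{<k}) from ℝ^m to (0,1] is differentiable, strictly positive, and sums to 1 over x_k ∈ 𝒳ₖ. Fix a reference parameter θ⁰ ∈ ℝ^m, let J(θ) = ∑_{x∈𝒳} π_θ(x) f(x), and define the surrogate L_{θ⁰}(θ) = E_{x∼π_{θ⁰}}[ ∑_{k=1}^n (π_θ(x_k|x_{<k}) / π_{θ⁰}(x_k|x_{<k})) · A^{π_{θ⁰}}(x_{<k}, x_k) ]. Then the gradients coincide at the reference point: ∇_θ L_{θ⁰}(θ)|_{θ=θ⁰} = ∇_θ J(θ)|_{θ=θ⁰}. -/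
open Finset

/-- `V^{π_θ}(x_{<r})` for the parameterized autoregressive policy with conditionals
`c k x θ = π_θ(x_k | x_{<k})`: the expected terminal reward obtained by completing the
length-`r` prefix of `x` with the conditionals of `π_θ`. -/
noncomputable def paramValue {n m : ℕ} {X : Fin n → Type} [∀ i, Fintype (X i)]
    [∀ i, DecidableEq (X i)]
    (c : (k : Fin n) → ((i : Fin n) → X i) → (Fin m → ℝ) → ℝ)
    (f : ((i : Fin n) → X i) → ℝ) (θ : Fin m → ℝ) (r : ℕ) (x : (i : Fin n) → X i) : ℝ :=
  ∑ y : (i : Fin n) → X i,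
    if ∀ i : Fin n, (i : ℕ) < r → y i = x i then
      (∏ j : Fin n, if r ≤ (j : ℕ) then c j y θ else 1) * f y
    else 0

/-- The advantage `A^{π_θ}(x_{<k}, x_k) = V^{π_θ}(x_{≤k}) − V^{π_θ}(x_{<k})`. -/
noncomputable def paramAdvantage {n m : ℕ} {X : Fin n → Type} [∀ i, Fintype (X i)]
    [∀ i, DecidableEq (X i)]
    (c : (k : Fin n) → ((i : Fin n) → X i) → (Fin m → ℝ) → ℝ)
    (f : ((i : Fin n) → X i) → ℝ) (θ : Fin m → ℝ) (k : Fin n) (x : (i : Fin n) → X i) : ℝ :=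
  paramValue c f θ ((k : ℕ) + 1) x - paramValue c f θ (k : ℕ) x

section Aux
variable {n m : ℕ} {X : Fin n → Type} [∀ i, Fintype (X i)] [∀ i, DecidableEq (X i)]

private lemma ppo_group_at (k : Fin n) (y : (i : Fin n) → X i)
    (G : ((i : Fin n) → X i) → ℝ) :
    ∑ x : (i : Fin n) → X i,
        (if ∀ i : Fin n, (i : ℕ) < (k : ℕ) → x i = y i then G x else 0)
      = ∑ v : X k, ∑ x : (i : Fin n) → X i,
          (if ∀ i : Fin n, (i : ℕ) < (k : ℕ) + 1 → x i = Function.update y k v i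
            then G x else 0) := by
  rw [Finset.sum_comm]
  refine Finset.sum_congr rfl fun x _ => ?_
  have key : ∀ v : X k,
      (∀ i : Fin n, (i : ℕ) < (k : ℕ) + 1 → x i = Function.update y k v i)
        ↔ ((∀ i : Fin n, (i : ℕ) < (k : ℕ) → x i = y i) ∧ x k = v) := by
    intro v
    constructor
    · intro h
      refine ⟨fun i hi => ?_, ?_⟩
      · have h1 := h i (Nat.lt_succ_of_lt hi)
        rwa [Function.update_of_ne (Fin.ne_of_val_ne (Nat.ne_of_lt hi))] at h1
      · have h1 := h k (Nat.lt_succ_self _)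
        rwa [Function.update_self] at h1
    · rintro ⟨h1, h2⟩ i hi
      rcases Nat.lt_succ_iff_lt_or_eq.mp hi with h | h
      · rw [Function.update_of_ne (Fin.ne_of_val_ne (Nat.ne_of_lt h)), h1 i h]
      · have : i = k := Fin.ext h
        subst this
        rwa [Function.update_self]
  by_cases hP : ∀ i : Fin n, (i : ℕ) < (k : ℕ) → x i = y i
  · rw [if_pos hP]
    have h2 : ∀ v : X k,
        (if (∀ i : Fin n, (i : ℕ) < (k : ℕ) + 1 → x i = Function.update y k v i)
          then G x else 0) = if x k = v then G x else 0 := fun v => by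
      rw [if_congr ((key v).trans (and_iff_right hP)) rfl rfl]
    rw [Finset.sum_congr rfl fun v _ => h2 v,
      Finset.sum_ite_eq Finset.univ (x k) fun _ => G x, if_pos (Finset.mem_univ _)]
  · rw [if_neg hP]
    refine (Finset.sum_eq_zero fun v _ => ?_).symm
    rw [if_neg fun h => hP ((key v).mp h).1]

private lemma ppo_prod_if_ge {r : ℕ} (hr : n ≤ r) (g : Fin n → ℝ) :
    (∏ j : Fin n, if r ≤ (j : ℕ) then g j else 1) = 1 :=
  Finset.prod_eq_one fun j _ => if_neg (by have := j.isLt; omega)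

private lemma ppo_prod_if_succ {r : ℕ} (hr : r < n) (g : Fin n → ℝ) :
    (∏ j : Fin n, if r ≤ (j : ℕ) then g j else 1)
      = g ⟨r, hr⟩ * ∏ j : Fin n, if r + 1 ≤ (j : ℕ) then g j else 1 := by
  rw [← Finset.mul_prod_erase Finset.univ _ (Finset.mem_univ (⟨r, hr⟩ : Fin n))]
  congr 1
  · simp
  · rw [← Finset.prod_erase (a := (⟨r, hr⟩ : Fin n)) Finset.univ
      (f := fun j : Fin n => if r + 1 ≤ (j : ℕ) then g j else 1) (by simp)]
    refine Finset.prod_congr rfl fun j hj => ?_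
    have hne : (j : ℕ) ≠ r := fun h => (Finset.mem_erase.mp hj).1 (Fin.ext h)
    by_cases h : r ≤ (j : ℕ)
    · rw [if_pos h, if_pos (by omega)]
    · rw [if_neg h, if_neg (by omega)]

private lemma ppo_erase_split (k : Fin n) (g : Fin n → ℝ) :
    (∏ j ∈ Finset.univ.erase k, g j)
      = (∏ j : Fin n, if (j : ℕ) < (k : ℕ) then g j else 1)
        * ∏ j : Fin n, if (k : ℕ) + 1 ≤ (j : ℕ) then g j else 1 := by
  rw [← Finset.prod_mul_distrib,
    ← Finset.prod_erase (a := k) Finset.univ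
      (f := fun j : Fin n =>
        (if (j : ℕ) < (k : ℕ) then g j else 1) * (if (k : ℕ) + 1 ≤ (j : ℕ) then g j else 1))
      (by simp)]
  refine Finset.prod_congr rfl fun j hj => ?_
  have hne : (j : ℕ) ≠ (k : ℕ) := fun h => (Finset.mem_erase.mp hj).1 (Fin.ext h)
  by_cases h : (j : ℕ) < (k : ℕ)
  · rw [if_pos h, if_neg (by omega), mul_one]
  · rw [if_neg h, if_pos (by omega), one_mul]

private lemma ppo_tail_base
    (c : (k : Fin n) → ((i : Fin n) → X i) → (Fin m → ℝ) → ℝ) (θ : Fin m → ℝ)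
    {r : ℕ} (hr : n ≤ r) (y : (i : Fin n) → X i) :
    ∑ x : (i : Fin n) → X i,
        (if ∀ i : Fin n, (i : ℕ) < r → x i = y i then
          ∏ j : Fin n, if r ≤ (j : ℕ) then c j x θ else 1 else 0) = 1 := by
  have h1 : ∀ x : (i : Fin n) → X i,
      (if ∀ i : Fin n, (i : ℕ) < r → x i = y i then
          ∏ j : Fin n, if r ≤ (j : ℕ) then c j x θ else 1 else 0)
        = if x = y then (1 : ℝ) else 0 := by
    intro x
    rw [ppo_prod_if_ge hr]
    exact if_congr ⟨fun h => funext fun i => h i (lt_of_lt_of_le i.isLt hr),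
      fun h i _ => congrFun h i⟩ rfl rfl
  rw [Finset.sum_congr rfl fun x _ => h1 x]
  simp

private lemma ppo_tail_one
    (c : (k : Fin n) → ((i : Fin n) → X i) → (Fin m → ℝ) → ℝ)
    (hdep : ∀ (k : Fin n) (x y : (i : Fin n) → X i) (θ : Fin m → ℝ),
      (∀ i : Fin n, i ≤ k → x i = y i) → c k x θ = c k y θ)
    (hsum : ∀ (k : Fin n) (x : (i : Fin n) → X i) (θ : Fin m → ℝ),
      ∑ v : X k, c k (Function.update x k v) θ = 1)
    (θ : Fin m → ℝ) :
    ∀ (t r : ℕ), n ≤ r + t → ∀ y : (i : Fin n) → X i,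
      ∑ x : (i : Fin n) → X i,
        (if ∀ i : Fin n, (i : ℕ) < r → x i = y i then
          ∏ j : Fin n, if r ≤ (j : ℕ) then c j x θ else 1 else 0) = 1 := by
  intro t
  induction t with
  | zero => intro r hr y; exact ppo_tail_base c θ (by omega) y
  | succ t ih =>
    intro r hr y
    by_cases hrn : r < n
    · set kr : Fin n := ⟨r, hrn⟩ with hkr
      have hgroup :
          (∑ x : (i : Fin n) → X i,
            (if ∀ i : Fin n, (i : ℕ) < r → x i = y i then
              ∏ j : Fin n, if r ≤ (j : ℕ) then c j x θ else 1 else 0))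
            = ∑ v : X kr, ∑ x : (i : Fin n) → X i,
                (if ∀ i : Fin n, (i : ℕ) < r + 1 → x i = Function.update y kr v i then
                  ∏ j : Fin n, if r ≤ (j : ℕ) then c j x θ else 1 else 0) :=
        ppo_group_at kr y _
      rw [hgroup]
      have inner : ∀ v : X kr,
          (∑ x : (i : Fin n) → X i,
            (if ∀ i : Fin n, (i : ℕ) < r + 1 → x i = Function.update y kr v i then
              ∏ j : Fin n, if r ≤ (j : ℕ) then c j x θ else 1 else 0))
            = c kr (Function.update y kr v) θ := by
        intro v
        set z := Function.update y kr v with hz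
        have h1 : ∀ x : (i : Fin n) → X i,
            (if ∀ i : Fin n, (i : ℕ) < r + 1 → x i = z i then
              ∏ j : Fin n, if r ≤ (j : ℕ) then c j x θ else 1 else 0)
              = c kr z θ * (if ∀ i : Fin n, (i : ℕ) < r + 1 → x i = z i then
                  ∏ j : Fin n, if r + 1 ≤ (j : ℕ) then c j x θ else 1 else 0) := by
          intro x
          by_cases h : ∀ i : Fin n, (i : ℕ) < r + 1 → x i = z i
          · rw [if_pos h, if_pos h, ppo_prod_if_succ hrn]
            have hcc : c kr x θ = c kr z θ :=
              hdep kr x z θ fun i hi => h i (Nat.lt_succ_of_le hi)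
            rw [hcc]
          · rw [if_neg h, if_neg h, mul_zero]
        rw [Finset.sum_congr rfl fun x _ => h1 x, ← Finset.mul_sum,
          ih (r + 1) (by omega) z, mul_one]
      rw [Finset.sum_congr rfl fun v _ => inner v]
      exact hsum kr y θ
    · exact ppo_tail_base c θ (by omega) y


private lemma ppo_lemI
    (c : (k : Fin n) → ((i : Fin n) → X i) → (Fin m → ℝ) → ℝ)
    (hdep : ∀ (k : Fin n) (x y : (i : Fin n) → X i) (θ : Fin m → ℝ),
      (∀ i : Fin n, i ≤ k → x i = y i) → c k x θ = c k y θ)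
    (hsum : ∀ (k : Fin n) (x : (i : Fin n) → X i) (θ : Fin m → ℝ),
      ∑ v : X k, c k (Function.update x k v) θ = 1)
    (θ : Fin m → ℝ) (f : ((i : Fin n) → X i) → ℝ) (k : Fin n)
    (d : ((i : Fin n) → X i) → ℝ)
    (hd : ∀ x y : (i : Fin n) → X i, (∀ i : Fin n, i ≤ k → x i = y i) → d x = d y) :
    ∑ x : (i : Fin n) → X i,
        (∏ j ∈ Finset.univ.erase k, c j x θ) * paramValue c f θ ((k : ℕ) + 1) x * d x
      = ∑ x : (i : Fin n) → X i, (∏ j ∈ Finset.univ.erase k, c j x θ) * f x * d x := by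
  have expand : ∀ x : (i : Fin n) → X i,
      (∏ j ∈ Finset.univ.erase k, c j x θ) * paramValue c f θ ((k : ℕ) + 1) x * d x
        = ∑ z : (i : Fin n) → X i,
            (if ∀ i : Fin n, (i : ℕ) < (k : ℕ) + 1 → z i = x i then
              (∏ j ∈ Finset.univ.erase k, c j x θ)
                * ((∏ j : Fin n, if (k : ℕ) + 1 ≤ (j : ℕ) then c j z θ else 1) * f z)
                * d x else 0) := by
    intro x
    rw [paramValue, Finset.mul_sum, Finset.sum_mul]
    refine Finset.sum_congr rfl fun z _ => ?_
    split_ifs <;> ring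
  rw [Finset.sum_congr rfl fun x _ => expand x, Finset.sum_comm]
  refine Finset.sum_congr rfl fun z _ => ?_
  have h1 : ∀ x : (i : Fin n) → X i,
      (if ∀ i : Fin n, (i : ℕ) < (k : ℕ) + 1 → z i = x i then
          (∏ j ∈ Finset.univ.erase k, c j x θ)
            * ((∏ j : Fin n, if (k : ℕ) + 1 ≤ (j : ℕ) then c j z θ else 1) * f z)
            * d x else 0)
        = ((∏ j : Fin n, if (j : ℕ) < (k : ℕ) then c j z θ else 1)
            * ((∏ j : Fin n, if (k : ℕ) + 1 ≤ (j : ℕ) then c j z θ else 1) * f z) * d z)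
          * (if ∀ i : Fin n, (i : ℕ) < (k : ℕ) + 1 → x i = z i then
              (∏ j : Fin n, if (k : ℕ) + 1 ≤ (j : ℕ) then c j x θ else 1) else 0) := by
    intro x
    by_cases h : ∀ i : Fin n, (i : ℕ) < (k : ℕ) + 1 → z i = x i
    · have h' : ∀ i : Fin n, (i : ℕ) < (k : ℕ) + 1 → x i = z i := fun i hi => (h i hi).symm
      rw [if_pos h, if_pos h', ppo_erase_split k (fun j => c j x θ)]
      have hlt : (∏ j : Fin n, if (j : ℕ) < (k : ℕ) then c j x θ else 1)
          = ∏ j : Fin n, if (j : ℕ) < (k : ℕ) then c j z θ else 1 := by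
        refine Finset.prod_congr rfl fun j _ => ?_
        by_cases hj : (j : ℕ) < (k : ℕ)
        · rw [if_pos hj, if_pos hj]
          refine hdep j x z θ fun i hi => h' i ?_
          have hij : (i : ℕ) ≤ (j : ℕ) := hi
          omega
        · rw [if_neg hj, if_neg hj]
      have hdz : d x = d z := hd x z fun i hi => h' i (Nat.lt_succ_of_le hi)
      rw [hlt, hdz]; ring
    · rw [if_neg h, if_neg (fun h' => h fun i hi => (h' i hi).symm), mul_zero]
  rw [Finset.sum_congr rfl fun x _ => h1 x, ← Finset.mul_sum,
    ppo_tail_one c hdep hsum θ n ((k : ℕ) + 1) (by have := k.isLt; omega) z, mul_one,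
    ppo_erase_split k (fun j => c j z θ)]
  ring

private lemma ppo_lemII
    (c : (k : Fin n) → ((i : Fin n) → X i) → (Fin m → ℝ) → ℝ)
    (hdep : ∀ (k : Fin n) (x y : (i : Fin n) → X i) (θ : Fin m → ℝ),
      (∀ i : Fin n, i ≤ k → x i = y i) → c k x θ = c k y θ)
    (hsum : ∀ (k : Fin n) (x : (i : Fin n) → X i) (θ : Fin m → ℝ),
      ∑ v : X k, c k (Function.update x k v) θ = 1)
    (θ : Fin m → ℝ) (f : ((i : Fin n) → X i) → ℝ) (k : Fin n)
    (d : ((i : Fin n) → X i) → ℝ)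
    (hd : ∀ x y : (i : Fin n) → X i, (∀ i : Fin n, i ≤ k → x i = y i) → d x = d y)
    (hd0 : ∀ y : (i : Fin n) → X i, ∑ v : X k, d (Function.update y k v) = 0) :
    ∑ x : (i : Fin n) → X i,
        (∏ j ∈ Finset.univ.erase k, c j x θ) * paramValue c f θ (k : ℕ) x * d x = 0 := by
  have expand : ∀ x : (i : Fin n) → X i,
      (∏ j ∈ Finset.univ.erase k, c j x θ) * paramValue c f θ (k : ℕ) x * d x
        = ∑ z : (i : Fin n) → X i,
            (if ∀ i : Fin n, (i : ℕ) < (k : ℕ) → z i = x i then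
              (∏ j ∈ Finset.univ.erase k, c j x θ)
                * ((∏ j : Fin n, if (k : ℕ) ≤ (j : ℕ) then c j z θ else 1) * f z)
                * d x else 0) := by
    intro x
    rw [paramValue, Finset.mul_sum, Finset.sum_mul]
    refine Finset.sum_congr rfl fun z _ => ?_
    split_ifs <;> ring
  rw [Finset.sum_congr rfl fun x _ => expand x, Finset.sum_comm]
  refine Finset.sum_eq_zero fun z _ => ?_
  have h1 : ∀ x : (i : Fin n) → X i,
      (if ∀ i : Fin n, (i : ℕ) < (k : ℕ) → z i = x i then
          (∏ j ∈ Finset.univ.erase k, c j x θ)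
            * ((∏ j : Fin n, if (k : ℕ) ≤ (j : ℕ) then c j z θ else 1) * f z)
            * d x else 0)
        = ((∏ j : Fin n, if (j : ℕ) < (k : ℕ) then c j z θ else 1)
            * ((∏ j : Fin n, if (k : ℕ) ≤ (j : ℕ) then c j z θ else 1) * f z))
          * (if ∀ i : Fin n, (i : ℕ) < (k : ℕ) → x i = z i then
              d x * (∏ j : Fin n, if (k : ℕ) + 1 ≤ (j : ℕ) then c j x θ else 1) else 0) := by
    intro x
    by_cases h : ∀ i : Fin n, (i : ℕ) < (k : ℕ) → z i = x i
    · have h' : ∀ i : Fin n, (i : ℕ) < (k : ℕ) → x i = z i := fun i hi => (h i hi).symm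
      rw [if_pos h, if_pos h', ppo_erase_split k (fun j => c j x θ)]
      have hlt : (∏ j : Fin n, if (j : ℕ) < (k : ℕ) then c j x θ else 1)
          = ∏ j : Fin n, if (j : ℕ) < (k : ℕ) then c j z θ else 1 := by
        refine Finset.prod_congr rfl fun j _ => ?_
        by_cases hj : (j : ℕ) < (k : ℕ)
        · rw [if_pos hj, if_pos hj]
          refine hdep j x z θ fun i hi => h' i ?_
          have hij : (i : ℕ) ≤ (j : ℕ) := hi
          omega
        · rw [if_neg hj, if_neg hj]
      rw [hlt]; ring
    · rw [if_neg h, if_neg (fun h' => h fun i hi => (h' i hi).symm), mul_zero]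
  rw [Finset.sum_congr rfl fun x _ => h1 x, ← Finset.mul_sum]
  have hzero : (∑ x : (i : Fin n) → X i,
      (if ∀ i : Fin n, (i : ℕ) < (k : ℕ) → x i = z i then
        d x * (∏ j : Fin n, if (k : ℕ) + 1 ≤ (j : ℕ) then c j x θ else 1) else 0)) = 0 := by
    rw [ppo_group_at k z
      (fun x => d x * ∏ j : Fin n, if (k : ℕ) + 1 ≤ (j : ℕ) then c j x θ else 1)]
    have hin : ∀ v : X k,
        (∑ x : (i : Fin n) → X i,
          (if ∀ i : Fin n, (i : ℕ) < (k : ℕ) + 1 → x i = Function.update z k v i then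
            d x * (∏ j : Fin n, if (k : ℕ) + 1 ≤ (j : ℕ) then c j x θ else 1) else 0))
          = d (Function.update z k v) := by
      intro v
      set w := Function.update z k v with hw
      have h2 : ∀ x : (i : Fin n) → X i,
          (if ∀ i : Fin n, (i : ℕ) < (k : ℕ) + 1 → x i = w i then
            d x * (∏ j : Fin n, if (k : ℕ) + 1 ≤ (j : ℕ) then c j x θ else 1) else 0)
            = d w * (if ∀ i : Fin n, (i : ℕ) < (k : ℕ) + 1 → x i = w i then
                (∏ j : Fin n, if (k : ℕ) + 1 ≤ (j : ℕ) then c j x θ else 1) else 0) := by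
        intro x
        by_cases h : ∀ i : Fin n, (i : ℕ) < (k : ℕ) + 1 → x i = w i
        · rw [if_pos h, if_pos h, hd x w fun i hi => h i (Nat.lt_succ_of_le hi)]
        · rw [if_neg h, if_neg h, mul_zero]
      rw [Finset.sum_congr rfl fun x _ => h2 x, ← Finset.mul_sum,
        ppo_tail_one c hdep hsum θ n ((k : ℕ) + 1) (by have := k.isLt; omega) w, mul_one]
    rw [Finset.sum_congr rfl fun v _ => hin v]
    exact hd0 z
  rw [hzero, mul_zero]

end Aux

/-- First-order equivalence of the PPO surrogate with the true objective.
For a parameterized family of autoregressive policies with conditionals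
`c k x θ = π_θ(x_k | x_{<k})` (differentiable in `θ`, valued in `(0,1]`, summing to 1
over the values of coordinate `k`, and depending only on the coordinates `≤ k`),
a reference parameter `θ⁰`, the true objective `J(θ) = ∑_x π_θ(x) f(x)` and the surrogate
`L_{θ⁰}(θ) = E_{x∼π_{θ⁰}}[ ∑_k (π_θ(x_k|x_{<k})/π_{θ⁰}(x_k|x_{<k})) A^{π_{θ⁰}}(x_{<k},x_k) ]`
have the same gradient at `θ = θ⁰`. -/
theorem ppo_surrogate_first_order {n m : ℕ} {X : Fin n → Type}
    [∀ i, Fintype (X i)] [∀ i, Nonempty (X i)] [∀ i, DecidableEq (X i)]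
    (f : ((i : Fin n) → X i) → ℝ)
    (c : (k : Fin n) → ((i : Fin n) → X i) → (Fin m → ℝ) → ℝ)
    (hdep : ∀ (k : Fin n) (x y : (i : Fin n) → X i) (θ : Fin m → ℝ),
      (∀ i : Fin n, i ≤ k → x i = y i) → c k x θ = c k y θ)
    (hdiff : ∀ (k : Fin n) (x : (i : Fin n) → X i), Differentiable ℝ (c k x))
    (hpos : ∀ (k : Fin n) (x : (i : Fin n) → X i) (θ : Fin m → ℝ), 0 < c k x θ)
    (hle : ∀ (k : Fin n) (x : (i : Fin n) → X i) (θ : Fin m → ℝ), c k x θ ≤ 1)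
    (hsum : ∀ (k : Fin n) (x : (i : Fin n) → X i) (θ : Fin m → ℝ),
      ∑ v : X k, c k (Function.update x k v) θ = 1)
    (θ0 : Fin m → ℝ) :
    fderiv ℝ (fun θ : Fin m → ℝ =>
        ∑ x : (i : Fin n) → X i, (∏ k : Fin n, c k x θ0) *
          ∑ k : Fin n, (c k x θ / c k x θ0) * paramAdvantage c f θ0 k x) θ0
      = fderiv ℝ (fun θ : Fin m → ℝ =>
          ∑ x : (i : Fin n) → X i, (∏ k : Fin n, c k x θ) * f x) θ0 := by
  classical
  have hD : ∀ (k : Fin n) (x : (i : Fin n) → X i),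
      HasFDerivAt (c k x) (fderiv ℝ (c k x) θ0) θ0 :=
    fun k x => (hdiff k x θ0).hasFDerivAt
  have hL : HasFDerivAt
      (fun θ : Fin m → ℝ =>
        ∑ x : (i : Fin n) → X i, (∏ k : Fin n, c k x θ0) *
          ∑ k : Fin n, (c k x θ / c k x θ0) * paramAdvantage c f θ0 k x)
      (∑ x : (i : Fin n) → X i, (∏ k : Fin n, c k x θ0) •
          ∑ k : Fin n, (paramAdvantage c f θ0 k x / c k x θ0) • fderiv ℝ (c k x) θ0) θ0 := by
    refine HasFDerivAt.fun_sum fun x _ => ?_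
    refine HasFDerivAt.const_mul ?_ _
    refine HasFDerivAt.fun_sum fun k _ => ?_
    have h1 : (fun θ : Fin m → ℝ => (c k x θ / c k x θ0) * paramAdvantage c f θ0 k x)
        = fun θ => c k x θ * (paramAdvantage c f θ0 k x / c k x θ0) := by
      funext θ; ring
    rw [h1]
    exact (hD k x).mul_const _
  have hJ : HasFDerivAt
      (fun θ : Fin m → ℝ => ∑ x : (i : Fin n) → X i, (∏ k : Fin n, c k x θ) * f x)
      (∑ x : (i : Fin n) → X i, f x •
          ∑ k : Fin n, (∏ j ∈ Finset.univ.erase k, c j x θ0) • fderiv ℝ (c k x) θ0) θ0 := by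
    refine HasFDerivAt.fun_sum fun x _ => ?_
    exact (HasFDerivAt.finset_prod fun k _ => hD k x).mul_const _
  rw [hL.fderiv, hJ.fderiv]
  refine ContinuousLinearMap.ext fun v => ?_
  simp only [ContinuousLinearMap.sum_apply, ContinuousLinearMap.smul_apply, smul_eq_mul]
  -- abbreviations
  have hdDep : ∀ (k : Fin n) (x y : (i : Fin n) → X i),
      (∀ i : Fin n, i ≤ k → x i = y i) →
      fderiv ℝ (c k x) θ0 v = fderiv ℝ (c k y) θ0 v := by
    intro k x y h
    have hcc : c k x = c k y := funext fun θ => hdep k x y θ h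
    rw [hcc]
  have hd0 : ∀ (k : Fin n) (y : (i : Fin n) → X i),
      ∑ v' : X k, fderiv ℝ (c k (Function.update y k v')) θ0 v = 0 := by
    intro k y
    have hconst : HasFDerivAt
        (fun θ : Fin m → ℝ => ∑ v' : X k, c k (Function.update y k v') θ)
        (∑ v' : X k, fderiv ℝ (c k (Function.update y k v')) θ0) θ0 :=
      HasFDerivAt.fun_sum fun v' _ => hD k _
    have hconst2 : HasFDerivAt
        (fun θ : Fin m → ℝ => ∑ v' : X k, c k (Function.update y k v') θ)
        (0 : (Fin m → ℝ) →L[ℝ] ℝ) θ0 := by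
      have hfn : (fun θ : Fin m → ℝ => ∑ v' : X k, c k (Function.update y k v') θ)
          = fun _ => (1 : ℝ) := funext fun θ => hsum k y θ
      rw [hfn]
      exact hasFDerivAt_const _ _
    have h0 := hconst.unique hconst2
    calc ∑ v' : X k, fderiv ℝ (c k (Function.update y k v')) θ0 v
        = (∑ v' : X k, fderiv ℝ (c k (Function.update y k v')) θ0) v := by
          rw [ContinuousLinearMap.sum_apply]
      _ = 0 := by rw [h0]; rfl
  simp only [Finset.mul_sum]
  rw [Finset.sum_comm]
  conv_rhs => rw [Finset.sum_comm]
  refine Finset.sum_congr rfl fun k _ => ?_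
  have per : ∀ x : (i : Fin n) → X i,
      (∏ k' : Fin n, c k' x θ0) *
          (paramAdvantage c f θ0 k x / c k x θ0 * fderiv ℝ (c k x) θ0 v)
        = (∏ j ∈ Finset.univ.erase k, c j x θ0) * paramValue c f θ0 ((k : ℕ) + 1) x *
              fderiv ℝ (c k x) θ0 v
          - (∏ j ∈ Finset.univ.erase k, c j x θ0) * paramValue c f θ0 (k : ℕ) x *
              fderiv ℝ (c k x) θ0 v := by
    intro x
    have hpne : c k x θ0 ≠ 0 := (hpos k x θ0).ne'
    rw [paramAdvantage,
      ← Finset.mul_prod_erase Finset.univ (fun j => c j x θ0) (Finset.mem_univ k)]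
    field_simp
  rw [Finset.sum_congr rfl fun x _ => per x, Finset.sum_sub_distrib,
    ppo_lemI c hdep hsum θ0 f k _ (hdDep k),
    ppo_lemII c hdep hsum θ0 f k _ (hdDep k) (hd0 k), sub_zero]
  refine Finset.sum_congr rfl fun x _ => ?_
  ring
end

section
/- (Unbiasedness of the population-based objective estimator.) Let Z = X × Ω be a finite set, μ a probability distribution on Z, λ ≥ 1 an integer, and let w : Z → ℝ, kl : Z → ℝ, and A : X × (multisets over X) → ℝ be arbitrary functions. For z = (z₁,…,z_λ) ∈ Z^λ write Γ(z) for the multiset of the X-components of z₁,…,z_λ, and define Ĥ(z) = (1/λ) ∑_{i=1}^λ [ w(z_i)·A(x_i, Γ(z)) + kl(z_i) ], where x_i is the X-component of z_i. Then the expectation of Ĥ under the λ-fold product measure μ^{⊗λ} equals E_{(x,σ)∼μ}[ w(x,σ) · E_{z'∼μ^{⊗(λ−1)}}[ A(x, {x} ∪ Γ(z')) ] + kl(x,σ) ], i.e., the expectation of the empirical average equals the expectation, over one draw (x,σ) from μ, of w(x,σ) times the expected advantage of x within a population consisting of x together with λ−1 fresh independent draws from μ, plus kl(x,σ). -/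
open Finset

/-- The population multiset of `X`-components of a tuple of draws from `Z = X × Ω`. -/
def popOf {X Ω : Type*} {N : ℕ} (z : Fin N → X × Ω) : Multiset X :=
  Multiset.map (fun i => (z i).1) Finset.univ.val

lemma popOf_insertNth {X Ω : Type*} {n : ℕ} (i : Fin (n + 1)) (p : X × Ω)
    (z' : Fin n → X × Ω) : popOf (i.insertNth p z') = p.1 ::ₘ popOf z' := by
  unfold popOf
  rw [Fin.univ_succAbove n i, Finset.cons_val, Multiset.map_cons,
    Fin.insertNth_apply_same, Finset.map_val, Multiset.map_map]
  congr 1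
  refine Multiset.map_congr rfl fun j _ => ?_
  simp [Fin.insertNth_apply_succAbove]

/-- Unbiasedness of the population-based objective estimator.
Let `Z = X × Ω` be finite, `μ` a probability distribution on `Z`, `λ ≥ 1`,
and `w, kl : Z → ℝ`, `A : X × (multisets over X) → ℝ` arbitrary. For
`z = (z₁,…,z_λ)` let `Γ(z)` be the multiset of `X`-components and
`Ĥ(z) = (1/λ) ∑_i [ w(z_i)·A(x_i, Γ(z)) + kl(z_i) ]`. Then the expectation of `Ĥ`
under `μ^{⊗λ}` equals
`E_{(x,σ)∼μ}[ w(x,σ) · E_{z'∼μ^{⊗(λ−1)}}[ A(x, {x} ∪ Γ(z')) ] + kl(x,σ) ]`. -/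
theorem population_estimator_unbiased {X Ω : Type*} [Fintype X] [Fintype Ω]
    [Nonempty X] [Nonempty Ω]
    (μ : X × Ω → ℝ) (hμ0 : ∀ z, 0 ≤ μ z) (hμ1 : ∑ z : X × Ω, μ z = 1)
    (N : ℕ) (hN : 1 ≤ N)
    (w kl : X × Ω → ℝ) (A : X → Multiset X → ℝ) :
    ∑ z : Fin N → X × Ω, (∏ i : Fin N, μ (z i)) *
        ((1 / (N : ℝ)) * ∑ i : Fin N, (w (z i) * A (z i).1 (popOf z) + kl (z i)))
      = ∑ p : X × Ω, μ p *
          (w p * (∑ z' : Fin (N - 1) → X × Ω,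
              (∏ i : Fin (N - 1), μ (z' i)) * A p.1 (p.1 ::ₘ popOf z')) + kl p) := by
  obtain ⟨n, rfl⟩ : ∃ n, N = n + 1 := ⟨N - 1, by omega⟩
  -- total mass of the product measure on `Fin n → X × Ω` is 1
  have hmass : ∑ z' : Fin n → X × Ω, ∏ i : Fin n, μ (z' i) = 1 := by
    rw [← Fintype.prod_sum (fun _ : Fin n => μ)]
    simp [hμ1]
  -- the value of the inner sum for a fixed coordinate `i`
  have key : ∀ i : Fin (n + 1),
      (∑ z : Fin (n + 1) → X × Ω, (∏ j : Fin (n + 1), μ (z j)) *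
        (w (z i) * A (z i).1 (popOf z) + kl (z i)))
      = ∑ p : X × Ω, μ p *
          (w p * (∑ z' : Fin n → X × Ω,
              (∏ j : Fin n, μ (z' j)) * A p.1 (p.1 ::ₘ popOf z')) + kl p) := by
    intro i
    rw [← (Fin.insertNthEquiv (fun _ => X × Ω) i).sum_comp
      (fun z => (∏ j : Fin (n + 1), μ (z j)) *
        (w (z i) * A (z i).1 (popOf z) + kl (z i)))]
    rw [Fintype.sum_prod_type]
    refine Finset.sum_congr rfl fun p _ => ?_
    have : ∀ z' : Fin n → X × Ω,
        (Fin.insertNthEquiv (fun _ => X × Ω) i (p, z') : Fin (n + 1) → X × Ω)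
          = i.insertNth p z' := fun _ => rfl
    simp only [this]
    have hsum : ∀ z' : Fin n → X × Ω,
        (fun z : Fin (n + 1) → X × Ω => (∏ j : Fin (n + 1), μ (z j)) *
          (w (z i) * A (z i).1 (popOf z) + kl (z i))) (i.insertNth p z')
        = μ p * ((∏ j : Fin n, μ (z' j)) *
            (w p * A p.1 (p.1 ::ₘ popOf z') + kl p)) := by
      intro z'
      simp only []
      rw [Fin.prod_univ_succAbove (fun j => (i.insertNth p z' : Fin (n+1) → X × Ω) j |> μ) i]
      simp [popOf_insertNth, mul_assoc]
    rw [Finset.sum_congr rfl fun z' _ => hsum z', ← Finset.mul_sum]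
    congr 1
    have hr : ∀ z' : Fin n → X × Ω,
        (∏ j : Fin n, μ (z' j)) * (w p * A p.1 (p.1 ::ₘ popOf z') + kl p)
        = w p * ((∏ j : Fin n, μ (z' j)) * A p.1 (p.1 ::ₘ popOf z'))
          + kl p * (∏ j : Fin n, μ (z' j)) := fun _ => by ring
    rw [Finset.sum_congr rfl fun z' _ => hr z', Finset.sum_add_distrib,
      ← Finset.mul_sum, ← Finset.mul_sum, hmass, mul_one]
  calc ∑ z : Fin (n + 1) → X × Ω, (∏ i : Fin (n + 1), μ (z i)) *
        ((1 / ((n + 1 : ℕ) : ℝ)) * ∑ i : Fin (n + 1),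
          (w (z i) * A (z i).1 (popOf z) + kl (z i)))
      = (1 / ((n + 1 : ℕ) : ℝ)) * ∑ i : Fin (n + 1),
          ∑ z : Fin (n + 1) → X × Ω, (∏ j : Fin (n + 1), μ (z j)) *
            (w (z i) * A (z i).1 (popOf z) + kl (z i)) := by
        have hz : ∀ z : Fin (n + 1) → X × Ω,
            (∏ i : Fin (n + 1), μ (z i)) *
              ((1 / ((n + 1 : ℕ) : ℝ)) * ∑ i : Fin (n + 1),
                (w (z i) * A (z i).1 (popOf z) + kl (z i)))
            = (1 / ((n + 1 : ℕ) : ℝ)) * ∑ i : Fin (n + 1),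
                (∏ j : Fin (n + 1), μ (z j)) *
                  (w (z i) * A (z i).1 (popOf z) + kl (z i)) := by
          intro z
          rw [Finset.mul_sum, Finset.mul_sum, Finset.mul_sum]
          refine Finset.sum_congr rfl fun i _ => ?_
          ring
        rw [Finset.sum_congr rfl fun z _ => hz z, ← Finset.mul_sum, Finset.sum_comm]
    _ = _ := by
        rw [Finset.sum_congr rfl fun i _ => key i]
        rw [Finset.sum_const, card_univ, Fintype.card_fin, nsmul_eq_mul]
        push_cast
        field_simp
        rfl
end
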